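/- The abstract state space of the abstract time-stamped CESK* machine is finite for any fixed program: if the address set and time set are finite, then the set of all abstract states (e, ρ, σ̂, κ, t) with e a subexpression of the program is finite. -/

import Mathlib

/- Statement 5: for a fixed program, if the address set and the time set are
   finite then the set of all abstract states (e, ρ, σ̂, κ, t), with e a
   subexpression of the program, is finite. -/

inductive Exp : Type
  | ref : String → Exp
  | lam : String → Exp → Exp
  | app : Exp → Exp → Exp
deriving DecidableEq

/-- The subexpressions of an expression. -/
def Exp.sub : Exp → List Exp
  | .ref x => [.ref x]
  | .lam x e => .lam x e :: e.sub
  | .app e₀ e₁ => .app e₀ e₁ :: (e₀.sub ++ e₁.sub)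

/-- The variables occurring in an expression. -/
def Exp.vars : Exp → List String
  | .ref x => [x]
  | .lam x e => x :: e.vars
  | .app e₀ e₁ => e₀.vars ++ e₁.vars

section Fixed

variable (p : Exp) (Addr Time : Type)

/-- Subexpressions of the program `p`. -/
def SubExp := {e : Exp // e ∈ p.sub}

/-- Variables of the program `p`. -/
def PVar := {x : String // x ∈ p.vars}

/-- Abstract environments: finite maps from the program's variables to
    addresses. -/
def AEnv := PVar p → Option Addr

/-- Abstract continuations: non-recursive, carrying a store address. -/
inductive AKont : Type
  | mt
  | ar (e : SubExp p) (ρ : AEnv p Addr) (a : Addr)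
  | fn (v : SubExp p) (ρ : AEnv p Addr) (a : Addr)

/-- Abstract storable values: closures over program subexpressions, or
    continuations. -/
inductive AStorable : Type
  | clo (v : SubExp p) (ρ : AEnv p Addr)
  | kont (κ : AKont p Addr)

/-- Abstract stores: maps from addresses to sets of storable values. -/
def AStore := Addr → Set (AStorable p Addr)

/-- Abstract states of the abstract time-stamped CESK* machine. -/
def AState := SubExp p × AEnv p Addr × AStore p Addr × AKont p Addr × Time

end Fixed

instance (p : Exp) : Finite (SubExp p) :=
  inferInstanceAs (Finite {e : Exp // e ∈ p.sub})

instance (p : Exp) : Finite (PVar p) :=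
  inferInstanceAs (Finite {x : String // x ∈ p.vars})

instance (p : Exp) (Addr : Type) [Finite Addr] : Finite (AEnv p Addr) :=
  inferInstanceAs (Finite (PVar p → Option Addr))

namespace AKont

variable {p : Exp} {Addr : Type}

/-- Continuations carry an address instead of a continuation, so they embed into a finite type. -/
def encode :
    AKont p Addr → Option ((SubExp p × AEnv p Addr × Addr) ⊕ (SubExp p × AEnv p Addr × Addr))
  | mt => none
  | ar e ρ a => some (.inl (e, ρ, a))
  | fn v ρ a => some (.inr (v, ρ, a))

theorem encode_injective : Function.Injective (encode : AKont p Addr → _) := by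
  rintro (_ | ⟨e, ρ, a⟩ | ⟨e, ρ, a⟩) (_ | ⟨e', ρ', a'⟩ | ⟨e', ρ', a'⟩) h <;> simp_all [encode]

instance [Finite Addr] : Finite (AKont p Addr) :=
  Finite.of_injective _ encode_injective

end AKont

namespace AStorable

variable {p : Exp} {Addr : Type}

def encode : AStorable p Addr → (SubExp p × AEnv p Addr) ⊕ AKont p Addr
  | clo v ρ => .inl (v, ρ)
  | kont κ => .inr κ

theorem encode_injective : Function.Injective (encode : AStorable p Addr → _) := by
  rintro (⟨v, ρ⟩ | κ) (⟨v', ρ'⟩ | κ') h <;> simp_all [encode]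

instance [Finite Addr] : Finite (AStorable p Addr) :=
  Finite.of_injective _ encode_injective

end AStorable

instance (p : Exp) (Addr : Type) [Finite Addr] : Finite (AStore p Addr) :=
  inferInstanceAs (Finite (Addr → Set (AStorable p Addr)))

theorem abstract_state_space_finite (p : Exp) (Addr Time : Type)
    [Finite Addr] [Finite Time] :
    Finite (AState p Addr Time) := by
  exact inferInstanceAs (Finite (SubExp p × AEnv p Addr × AStore p Addr × AKont p Addr × Time))
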